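/- arXiv:1308.4535 — 7 statements merged into one kernel-verified Lean document; each statement's English description precedes it below -/
import Mathlib

section
/- Let S_1,...,S_{p+q} be real symmetric m×m matrices satisfying the Clifford relations S_i^2 = 1_m, with S_i S_j = S_j S_i when the indices lie on opposite sides of p and S_i S_j = −S_j S_i when i ≠ j lie on the same side. Define the Clifford quartic form P̃(w) = Σ_{i=1}^p (wᵀS_i w)^2 − Σ_{j=1}^q (wᵀS_{p+j} w)^2 on ℝ^m. Then the gradient satisfies P̃(grad P̃(w)) = 2^8 · P̃(w)^3 for all w ∈ ℝ^m. -/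
/-!
Write `s i = wᵀ S i w` and `u = ∑ i, ε i s i S i w`, so that `grad P̃(w) = 4 u`. The Clifford
relations say `S i S j = -ε i ε j S j S i` for `i ≠ j`. Reversing a product `S i S j S k` of three
distinct factors then costs the sign `-1`, while transposing it reverses it, so `wᵀ S i S j S k w = 0`.
Hence `uᵀ S j S k w` vanishes for `k ≠ j` (the terms `i = j` and `i = k` cancel) and equals `P̃(w)`
for `k = j`, which gives `uᵀ S j u = ε j s j P̃(w)` and `P̃(u) = P̃(w)³`.
-/

open Matrix

variable {ι n : Type*} [Fintype n]

theorem Matrix.IsSymm.mulVec_dotProduct {M : Matrix n n ℝ} (hM : M.IsSymm) (x y : n → ℝ) :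
    M *ᵥ x ⬝ᵥ y = x ⬝ᵥ M *ᵥ y := by
  rw [dotProduct_comm, ← dotProduct_transpose_mulVec, hM.eq]

theorem hasLineDerivAt_dotProduct_mulVec_self {M : Matrix n n ℝ} (hM : M.IsSymm) (w v : n → ℝ) :
    HasLineDerivAt ℝ (fun x => x ⬝ᵥ M *ᵥ x) (2 * (M *ᵥ w ⬝ᵥ v)) w v := by
  classical
  convert M.toQuadraticForm'.hasLineDerivAt w v using 1
  · ext x
    simp [Matrix.toQuadraticForm', toLinearMap₂'_apply']
  · simp only [Matrix.toQuadraticForm', LinearMap.BilinMap.polar_toQuadraticMap,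
      toLinearMap₂'_apply', hM.mulVec_dotProduct, dotProduct_comm v]
    ring

theorem mul_eq_neg_sign_smul_mul {p q : ℕ} {S : Fin (p + q) → Matrix n n ℝ}
    (hcomm : ∀ i j : Fin (p + q),
      (((i : ℕ) < p ∧ p ≤ (j : ℕ)) ∨ (p ≤ (i : ℕ) ∧ (j : ℕ) < p)) →
      S i * S j = S j * S i)
    (hanti : ∀ i j : Fin (p + q), i ≠ j →
      (((i : ℕ) < p ∧ (j : ℕ) < p) ∨ (p ≤ (i : ℕ) ∧ p ≤ (j : ℕ))) →
      S i * S j = -(S j * S i))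
    {ε : Fin (p + q) → ℝ} (hε : ∀ i, ε i = if (i : ℕ) < p then 1 else -1)
    {i j : Fin (p + q)} (hij : i ≠ j) :
    S i * S j = -(ε i * ε j) • (S j * S i) := by
  rw [hε i, hε j]
  by_cases hi : (i : ℕ) < p <;> by_cases hj : (j : ℕ) < p <;> simp only [hi, hj, if_true, if_false]
  · simp [hanti i j hij (.inl ⟨hi, hj⟩)]
  · simp [hcomm i j (.inl ⟨hi, not_lt.mp hj⟩)]
  · simp [hcomm i j (.inr ⟨not_lt.mp hi, hj⟩)]
  · simp [hanti i j hij (.inr ⟨not_lt.mp hi, not_lt.mp hj⟩)]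

section TripleProducts

variable [DecidableEq n] {S : ι → Matrix n n ℝ} {ε : ι → ℝ}

theorem mul_mul_self_eq_smul (hsq : ∀ i, S i * S i = 1)
    (hrel : ∀ i j, i ≠ j → S i * S j = -(ε i * ε j) • (S j * S i)) {i j : ι} (hij : i ≠ j) :
    S i * S j * S i = -(ε i * ε j) • S j := by
  rw [hrel i j hij, smul_mul_assoc, mul_assoc, hsq, mul_one]

theorem dotProduct_mul_mul_mulVec_eq_zero (hS : ∀ i, (S i).IsSymm) (hε : ∀ i, ε i ^ 2 = 1)
    (hrel : ∀ i j, i ≠ j → S i * S j = -(ε i * ε j) • (S j * S i)) {i j k : ι}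
    (hij : i ≠ j) (hjk : j ≠ k) (hik : i ≠ k) (w : n → ℝ) :
    w ⬝ᵥ (S i * S j * S k) *ᵥ w = 0 := by
  have hsign : -(ε k * ε j) * -(ε k * ε i) * -(ε j * ε i) = -1 := by
    linear_combination (-(ε j ^ 2 * ε i ^ 2)) * hε k - ε i ^ 2 * hε j - hε i
  have hrev : S k * S j * S i = -(S i * S j * S k) := by
    rw [hrel k j hjk.symm, smul_mul_assoc, mul_assoc, hrel k i hik.symm, mul_smul_comm,
      ← mul_assoc, hrel j i hij.symm, smul_mul_assoc, smul_smul, smul_smul, hsign, neg_one_smul]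
  have htr : (S i * S j * S k)ᵀ = S k * S j * S i := by
    rw [transpose_mul, transpose_mul, (hS i).eq, (hS j).eq, (hS k).eq, mul_assoc]
  have h := dotProduct_transpose_mulVec (S i * S j * S k) w w
  rw [htr, hrev, neg_mulVec, dotProduct_neg] at h
  linarith

end TripleProducts

variable [Fintype ι]

/-- With `ε i = 1` for `i < p` and `ε i = -1` otherwise, this is the paper's `P̃`. -/
def cliffordQuartic (S : ι → Matrix n n ℝ) (ε : ι → ℝ) (x : n → ℝ) : ℝ :=
  ∑ i, ε i * (x ⬝ᵥ S i *ᵥ x) ^ 2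

/-- A quarter of the gradient of `cliffordQuartic S ε` at `w`. -/
def cliffordQuarticGrad (S : ι → Matrix n n ℝ) (ε : ι → ℝ) (w : n → ℝ) : n → ℝ :=
  ∑ i, (ε i * (w ⬝ᵥ S i *ᵥ w)) • S i *ᵥ w

theorem cliffordQuartic_smul (S : ι → Matrix n n ℝ) (ε : ι → ℝ) (c : ℝ) (x : n → ℝ) :
    cliffordQuartic S ε (c • x) = c ^ 4 * cliffordQuartic S ε x := by
  simp only [cliffordQuartic, mulVec_smul, dotProduct_smul, smul_dotProduct, smul_eq_mul,
    Finset.mul_sum]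
  exact Finset.sum_congr rfl fun i _ => by ring

theorem differentiable_cliffordQuartic (S : ι → Matrix n n ℝ) (ε : ι → ℝ) :
    Differentiable ℝ (cliffordQuartic S ε) := by
  unfold cliffordQuartic
  simp only [dotProduct, mulVec]
  fun_prop

theorem hasLineDerivAt_cliffordQuartic {S : ι → Matrix n n ℝ} (hS : ∀ i, (S i).IsSymm)
    (ε : ι → ℝ) (w v : n → ℝ) :
    HasLineDerivAt ℝ (cliffordQuartic S ε) (4 * (cliffordQuarticGrad S ε w ⬝ᵥ v)) w v := by
  have hsum := HasDerivAt.fun_sum (u := Finset.univ) fun i _ =>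
    ((hasLineDerivAt_dotProduct_mulVec_self (hS i) w v).pow 2).const_mul (ε i)
  simp only [zero_smul, add_zero] at hsum
  refine hsum.congr_deriv ?_
  simp only [cliffordQuarticGrad, sum_dotProduct, smul_dotProduct, smul_eq_mul, Finset.mul_sum]
  exact Finset.sum_congr rfl fun i _ => by ring

theorem fderiv_cliffordQuartic_apply {S : ι → Matrix n n ℝ} (hS : ∀ i, (S i).IsSymm)
    (ε : ι → ℝ) (w v : n → ℝ) :
    fderiv ℝ (cliffordQuartic S ε) w v = 4 * (cliffordQuarticGrad S ε w ⬝ᵥ v) := by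
  rw [← (differentiable_cliffordQuartic S ε w).lineDeriv_eq_fderiv,
    (hasLineDerivAt_cliffordQuartic hS ε w v).lineDeriv]

section QuarticAtGradient

variable {S : ι → Matrix n n ℝ} {ε : ι → ℝ}

theorem cliffordQuarticGrad_dotProduct (hS : ∀ i, (S i).IsSymm) (w : n → ℝ) :
    cliffordQuarticGrad S ε w ⬝ᵥ w = cliffordQuartic S ε w := by
  simp only [cliffordQuarticGrad, cliffordQuartic, sum_dotProduct, smul_dotProduct, smul_eq_mul,
    (hS _).mulVec_dotProduct]
  exact Finset.sum_congr rfl fun i _ => by ring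

theorem cliffordQuarticGrad_dotProduct_mul_mulVec (hS : ∀ i, (S i).IsSymm) (w : n → ℝ)
    (j k : ι) :
    cliffordQuarticGrad S ε w ⬝ᵥ (S j * S k) *ᵥ w =
      ∑ i, ε i * (w ⬝ᵥ S i *ᵥ w) * (w ⬝ᵥ (S i * S j * S k) *ᵥ w) := by
  simp only [cliffordQuarticGrad, sum_dotProduct, smul_dotProduct, smul_eq_mul,
    (hS _).mulVec_dotProduct, mulVec_mulVec, mul_assoc]

variable [DecidableEq n]

theorem cliffordQuarticGrad_dotProduct_mul_mulVec_of_ne (hS : ∀ i, (S i).IsSymm)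
    (hsq : ∀ i, S i * S i = 1) (hε : ∀ i, ε i ^ 2 = 1)
    (hrel : ∀ i j, i ≠ j → S i * S j = -(ε i * ε j) • (S j * S i)) (w : n → ℝ) {j k : ι}
    (hkj : k ≠ j) :
    cliffordQuarticGrad S ε w ⬝ᵥ (S j * S k) *ᵥ w = 0 := by
  rw [cliffordQuarticGrad_dotProduct_mul_mulVec hS, Fintype.sum_eq_add j k hkj.symm
    fun i hi => by rw [dotProduct_mul_mul_mulVec_eq_zero hS hε hrel hi.1 hkj.symm hi.2, mul_zero],
    hsq, one_mul, mul_mul_self_eq_smul hsq hrel hkj, smul_mulVec, dotProduct_smul, smul_eq_mul]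
  linear_combination (-(ε j * (w ⬝ᵥ S j *ᵥ w) * (w ⬝ᵥ S k *ᵥ w))) * hε k

theorem cliffordQuarticGrad_dotProduct_mulVec (hS : ∀ i, (S i).IsSymm)
    (hsq : ∀ i, S i * S i = 1) (hε : ∀ i, ε i ^ 2 = 1)
    (hrel : ∀ i j, i ≠ j → S i * S j = -(ε i * ε j) • (S j * S i)) (w : n → ℝ) (j : ι) :
    cliffordQuarticGrad S ε w ⬝ᵥ S j *ᵥ cliffordQuarticGrad S ε w =
      ε j * (w ⬝ᵥ S j *ᵥ w) * cliffordQuartic S ε w := by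
  nth_rewrite 2 [cliffordQuarticGrad]
  simp only [mulVec_sum, mulVec_smul, dotProduct_sum, dotProduct_smul, smul_eq_mul, mulVec_mulVec]
  rw [Finset.sum_eq_single j fun k _ hkj => by
      rw [cliffordQuarticGrad_dotProduct_mul_mulVec_of_ne hS hsq hε hrel w hkj, mul_zero]
    (by simp), hsq, one_mulVec, cliffordQuarticGrad_dotProduct hS]

theorem cliffordQuartic_cliffordQuarticGrad (hS : ∀ i, (S i).IsSymm)
    (hsq : ∀ i, S i * S i = 1) (hε : ∀ i, ε i ^ 2 = 1)
    (hrel : ∀ i j, i ≠ j → S i * S j = -(ε i * ε j) • (S j * S i)) (w : n → ℝ) :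
    cliffordQuartic S ε (cliffordQuarticGrad S ε w) = cliffordQuartic S ε w ^ 3 := by
  have hcube : cliffordQuartic S ε w ^ 3 =
      (∑ j, ε j * (w ⬝ᵥ S j *ᵥ w) ^ 2) * cliffordQuartic S ε w ^ 2 := by
    rw [cliffordQuartic]; ring
  rw [cliffordQuartic, hcube, Finset.sum_mul]
  simp only [cliffordQuarticGrad_dotProduct_mulVec hS hsq hε hrel]
  refine Finset.sum_congr rfl fun j _ => ?_
  linear_combination (ε j * (w ⬝ᵥ S j *ᵥ w) ^ 2 * cliffordQuartic S ε w ^ 2) * hε j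

end QuarticAtGradient

/-- The Clifford quartic form satisfies `P̃(grad P̃(w)) = 2^8 · P̃(w)^3`. -/
theorem clifford_quartic_grad (p q m : ℕ)
    (S : Fin (p + q) → Matrix (Fin m) (Fin m) ℝ)
    (hsym : ∀ i, (S i)ᵀ = S i)
    (hsq : ∀ i, S i * S i = 1)
    (hcomm : ∀ i j : Fin (p + q),
      (((i : ℕ) < p ∧ p ≤ (j : ℕ)) ∨ (p ≤ (i : ℕ) ∧ (j : ℕ) < p)) →
      S i * S j = S j * S i)
    (hanti : ∀ i j : Fin (p + q), i ≠ j →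
      (((i : ℕ) < p ∧ (j : ℕ) < p) ∨ (p ≤ (i : ℕ) ∧ p ≤ (j : ℕ))) →
      S i * S j = -(S j * S i))
    (ε : Fin (p + q) → ℝ)
    (hε : ∀ i, ε i = if (i : ℕ) < p then 1 else -1)
    (Ptilde : (Fin m → ℝ) → ℝ)
    (hPt : ∀ x : Fin m → ℝ, Ptilde x = ∑ i : Fin (p + q), ε i * (x ⬝ᵥ (S i).mulVec x) ^ 2)
    (grad : (Fin m → ℝ) → (Fin m → ℝ))
    (hgrad : ∀ (x : Fin m → ℝ) (k : Fin m), grad x k = fderiv ℝ Ptilde x (Pi.single k 1)) :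
    ∀ w : Fin m → ℝ, Ptilde (grad w) = 2 ^ 8 * (Ptilde w) ^ 3 := by
  intro w
  have hP : Ptilde = cliffordQuartic S ε := funext hPt
  have hgrad_w : grad w = (4 : ℝ) • cliffordQuarticGrad S ε w := by
    ext k
    rw [hgrad, hP, fderiv_cliffordQuartic_apply hsym, dotProduct_single_one, Pi.smul_apply,
      smul_eq_mul]
  have hε_sq : ∀ i, ε i ^ 2 = 1 := fun i => by rw [hε i]; split_ifs <;> norm_num
  rw [hP, hgrad_w, cliffordQuartic_smul, cliffordQuartic_cliffordQuarticGrad hsym hsq hε_sq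
    (fun i j => mul_eq_neg_sign_smul_mul hcomm hanti hε)]
  norm_num
end

section
/- Let X, Y_1,...,Y_r be real symmetric d×d matrices and B_1,...,B_r real skew-symmetric d×d matrices satisfying the polynomial identity (uᵀXu)(uᵀv) − (uᵀu)(uᵀXv) = Σ_{i=1}^r (uᵀY_i u)(uᵀB_i v) for all u, v ∈ ℝ^d. Let s be the number of indices i such that Y_i is not a scalar matrix. If d > 2s, then X is a scalar multiple of the identity and both sides of the identity vanish identically. -/
/-!
Polarizing the identity at `u = x ± y`, `v = y`, for a unit vector `x` and `y ⊥ x`, gives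
`(xᵀXx)(yᵀy) − yᵀXy = 2 ∑ᵢ (xᵀYᵢy)(xᵀBᵢy)`. Let `x` be an eigenvector of `X` with
eigenvalue `λ`. If more than `s` eigenvalues lay strictly below `λ`, their eigenvectors would
span some `y ≠ 0` with `xᵀ(Yᵢ + Bᵢ)y = 0` for the `s` non-scalar `Yᵢ`. Then the left side is
positive, while every term on the right is `−(xᵀYᵢy)² ≤ 0` or, for scalar `Yᵢ`, zero. Applied
also to `−X, −B`: at most `s` eigenvalues lie strictly below, and at most `s` strictly above,
any eigenvalue. Two distinct eigenvalues would thus force `d ≤ 2s`.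
-/

open Matrix Finset

theorem Matrix.dotProduct_mulVec_comm_of_transpose_eq {R n : Type*} [CommSemiring R] [Fintype n]
    {M : Matrix n n R} (hM : Mᵀ = M) (u v : n → R) :
    v ⬝ᵥ M *ᵥ u = u ⬝ᵥ M *ᵥ v := by
  rw [← dotProduct_transpose_mulVec, hM]

theorem Matrix.dotProduct_mulVec_self_eq_zero_of_transpose_eq_neg {n : Type*} [Fintype n]
    {M : Matrix n n ℝ} (hM : Mᵀ = -M) (u : n → ℝ) :
    u ⬝ᵥ M *ᵥ u = 0 := by
  have h := dotProduct_transpose_mulVec M u u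
  rw [hM, neg_mulVec, dotProduct_neg] at h
  linarith

theorem Matrix.exists_ne_zero_mulVec_eq_zero_of_card_lt {K m n : Type*} [Field K] [Fintype m]
    [Fintype n] (A : Matrix m n K) (h : Fintype.card m < Fintype.card n) :
    ∃ c ≠ 0, A *ᵥ c = 0 := by
  have hker : LinearMap.ker A.mulVecLin ≠ ⊥ :=
    LinearMap.ker_ne_bot_of_finrank_lt (by simpa using h)
  obtain ⟨c, hc, hc0⟩ := (Submodule.ne_bot_iff _).1 hker
  exact ⟨c, hc0, hc⟩

theorem Matrix.IsHermitian.eq_smul_one_of_eigenvalues_eq {n : Type*} [Fintype n] [DecidableEq n]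
    {A : Matrix n n ℝ} (hA : A.IsHermitian) {c : ℝ} (hc : ∀ j, hA.eigenvalues j = c) :
    A = c • 1 := by
  have hdiag : (RCLike.ofReal ∘ hA.eigenvalues : n → ℝ) = fun _ => c :=
    funext fun j => by simp [hc]
  rw [hA.spectral_theorem, hdiag, ← smul_one_eq_diagonal, map_smul, map_one]

variable {n ι : Type*} [Fintype n] [Fintype ι]

def DecompIdentity (X : Matrix n n ℝ) (Y B : ι → Matrix n n ℝ) : Prop :=
  ∀ u v : n → ℝ, (u ⬝ᵥ X *ᵥ u) * (u ⬝ᵥ v) - (u ⬝ᵥ u) * (u ⬝ᵥ X *ᵥ v)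
    = ∑ i, (u ⬝ᵥ Y i *ᵥ u) * (u ⬝ᵥ B i *ᵥ v)

def nonscalarIndices [DecidableEq n] (Y : ι → Matrix n n ℝ) : Set ι :=
  {i | ¬ ∃ c : ℝ, Y i = c • (1 : Matrix n n ℝ)}

theorem sum_mul_nonpos_of_orthogonal [DecidableEq n] {Y B : ι → Matrix n n ℝ} {x y : n → ℝ}
    (hxy : x ⬝ᵥ y = 0) (hker : ∀ i ∈ nonscalarIndices Y, x ⬝ᵥ (Y i + B i) *ᵥ y = 0) :
    ∑ i, (x ⬝ᵥ Y i *ᵥ y) * (x ⬝ᵥ B i *ᵥ y) ≤ 0 := by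
  refine sum_nonpos fun i _ => ?_
  by_cases hi : i ∈ nonscalarIndices Y
  · have hBY : x ⬝ᵥ B i *ᵥ y = -(x ⬝ᵥ Y i *ᵥ y) := by
      have := hker i hi
      rw [add_mulVec, dotProduct_add] at this
      linarith
    rw [hBY, mul_neg, neg_nonpos]
    exact mul_self_nonneg _
  · obtain ⟨c, hc⟩ := not_not.1 hi
    rw [hc, smul_mulVec, one_mulVec, dotProduct_smul, hxy, smul_zero, zero_mul]

section Orthonormal

variable {κ : Type*} [Fintype κ] [DecidableEq κ] {e : κ → n → ℝ}

theorem dotProduct_sum_smul_of_orthonormal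
    (he : ∀ j k, e j ⬝ᵥ e k = if j = k then 1 else 0) (c : κ → ℝ) (k : κ) :
    e k ⬝ᵥ ∑ j, c j • e j = c k := by
  simp [dotProduct_sum, dotProduct_smul, he]

theorem sum_smul_dotProduct_mulVec_lt_of_orthonormal
    (he : ∀ j k, e j ⬝ᵥ e k = if j = k then 1 else 0) {X : Matrix n n ℝ} {μ : κ → ℝ}
    (heig : ∀ j, X *ᵥ e j = μ j • e j) {a : ℝ} (hlt : ∀ j, μ j < a) {c : κ → ℝ}
    (hc : c ≠ 0) :
    (∑ j, c j • e j) ⬝ᵥ X *ᵥ ∑ j, c j • e j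
      < a * ((∑ j, c j • e j) ⬝ᵥ ∑ j, c j • e j) := by
  obtain ⟨j₀, hj₀⟩ := Function.ne_iff.1 hc
  simp only [mulVec_sum, mulVec_smul, heig, smul_smul, sum_dotProduct, smul_dotProduct,
    dotProduct_sum_smul_of_orthonormal he, smul_eq_mul, mul_sum]
  refine sum_lt_sum (fun j _ => ?_) ⟨j₀, mem_univ _, ?_⟩
  · nlinarith [hlt j, mul_self_nonneg (c j)]
  · nlinarith [hlt j₀, mul_self_pos.2 hj₀]

end Orthonormal

namespace DecompIdentity

variable {X : Matrix n n ℝ} {Y B : ι → Matrix n n ℝ}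

theorem neg (h : DecompIdentity X Y B) : DecompIdentity (-X) Y (-B) := by
  intro u v
  simp only [neg_mulVec, dotProduct_neg, Pi.neg_apply, mul_neg, sum_neg_distrib]
  linarith [h u v]

theorem polarization (h : DecompIdentity X Y B) (hX : Xᵀ = X) (hY : ∀ i, (Y i)ᵀ = Y i)
    (hB : ∀ i, (B i)ᵀ = -B i) {x y : n → ℝ} (hx : x ⬝ᵥ x = 1) (hxy : x ⬝ᵥ y = 0) :
    (x ⬝ᵥ X *ᵥ x) * (y ⬝ᵥ y) - y ⬝ᵥ X *ᵥ y
      = 2 * ∑ i, (x ⬝ᵥ Y i *ᵥ y) * (x ⬝ᵥ B i *ᵥ y) := by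
  have hyx : y ⬝ᵥ x = 0 := by rwa [dotProduct_comm]
  have hterm : ∀ i, ((x + y) ⬝ᵥ Y i *ᵥ (x + y)) * ((x + y) ⬝ᵥ B i *ᵥ y)
      - ((x - y) ⬝ᵥ Y i *ᵥ (x - y)) * ((x - y) ⬝ᵥ B i *ᵥ y)
      = 4 * ((x ⬝ᵥ Y i *ᵥ y) * (x ⬝ᵥ B i *ᵥ y)) := by
    intro i
    simp only [mulVec_add, mulVec_sub, add_dotProduct, sub_dotProduct, dotProduct_add,
      dotProduct_sub, dotProduct_mulVec_comm_of_transpose_eq (hY i) x y,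
      dotProduct_mulVec_self_eq_zero_of_transpose_eq_neg (hB i) y]
    ring
  have hodd := congrArg₂ (· - ·) (h (x + y) y) (h (x - y) y)
  simp only [← sum_sub_distrib, hterm, ← mul_sum] at hodd
  simp only [mulVec_add, mulVec_sub, add_dotProduct, sub_dotProduct, dotProduct_add,
    dotProduct_sub, dotProduct_mulVec_comm_of_transpose_eq hX x y, hx, hxy, hyx] at hodd
  linarith

variable [DecidableEq n]

theorem card_le_ncard_nonscalarIndices (h : DecompIdentity X Y B) (hX : Xᵀ = X)
    (hY : ∀ i, (Y i)ᵀ = Y i) (hB : ∀ i, (B i)ᵀ = -B i) {x : n → ℝ} (hx : x ⬝ᵥ x = 1)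
    {κ : Type*} [Fintype κ] [DecidableEq κ] {e : κ → n → ℝ} {μ : κ → ℝ}
    (he : ∀ j k, e j ⬝ᵥ e k = if j = k then 1 else 0) (hxe : ∀ j, x ⬝ᵥ e j = 0)
    (heig : ∀ j, X *ᵥ e j = μ j • e j) (hlt : ∀ j, μ j < x ⬝ᵥ X *ᵥ x) :
    Fintype.card κ ≤ (nonscalarIndices Y).ncard := by
  classical
  by_contra! hcard
  set S := nonscalarIndices Y
  obtain ⟨c, hc, hAc⟩ := exists_ne_zero_mulVec_eq_zero_of_card_lt
    (of fun (i : S) j => x ⬝ᵥ (Y i + B i) *ᵥ e j)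
    (by rwa [← Nat.card_eq_fintype_card, Nat.card_coe_set_eq])
  set y := ∑ j, c j • e j
  have hxy : x ⬝ᵥ y = 0 := by simp [y, dotProduct_sum, hxe]
  have hker : ∀ i ∈ S, x ⬝ᵥ (Y i + B i) *ᵥ y = 0 := fun i hi => by
    simp only [y, mulVec_sum, mulVec_smul, dotProduct_sum, dotProduct_smul, smul_eq_mul]
    exact (sum_congr rfl fun j _ => mul_comm _ _).trans (congrFun hAc ⟨i, hi⟩)
  have hpos := sum_smul_dotProduct_mulVec_lt_of_orthonormal he heig hlt hc
  linarith [h.polarization hX hY hB hx hxy, sum_mul_nonpos_of_orthogonal hxy hker]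

theorem card_filter_lt_le_ncard_nonscalarIndices (h : DecompIdentity X Y B)
    (hX : Xᵀ = X) (hY : ∀ i, (Y i)ᵀ = Y i) (hB : ∀ i, (B i)ᵀ = -B i) {e : n → n → ℝ} {μ : n → ℝ}
    (he : ∀ j k, e j ⬝ᵥ e k = if j = k then 1 else 0) (heig : ∀ j, X *ᵥ e j = μ j • e j)
    (j₀ : n) :
    #{j | μ j < μ j₀} ≤ (nonscalarIndices Y).ncard := by
  rw [← Fintype.card_subtype]
  refine h.card_le_ncard_nonscalarIndices hX hY hB (x := e j₀)
    (e := fun j : {j // μ j < μ j₀} => e j) (μ := fun j => μ j) (by simp [he])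
    (fun j k => by simp [he, Subtype.ext_iff])
    (fun j => by simp [he, ne_of_apply_ne μ j.2.ne']) (fun j => heig j) (fun j => ?_)
  simpa [heig, he] using j.2

theorem eigenvalues_eq (h : DecompIdentity X Y B) (hX : Xᵀ = X)
    (hY : ∀ i, (Y i)ᵀ = Y i) (hB : ∀ i, (B i)ᵀ = -B i) {e : n → n → ℝ} {μ : n → ℝ}
    (he : ∀ j k, e j ⬝ᵥ e k = if j = k then 1 else 0) (heig : ∀ j, X *ᵥ e j = μ j • e j)
    (hcard : 2 * (nonscalarIndices Y).ncard < Fintype.card n) (j₀ j₁ : n) :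
    μ j₀ = μ j₁ := by
  have hnlt : ∀ k₀ k₁, ¬ μ k₁ < μ k₀ := by
    intro k₀ k₁ hlt
    have hbelow := h.card_filter_lt_le_ncard_nonscalarIndices hX hY hB he heig k₀
    have habove := h.neg.card_filter_lt_le_ncard_nonscalarIndices
      (by rw [transpose_neg, hX]) hY (fun i => by simp [hB]) he (μ := -μ)
      (fun j => by simp [neg_mulVec, heig]) k₁
    have hcover :
        univ ⊆ ({j | μ j < μ k₀} : Finset n) ∪ ({j | (-μ) j < (-μ) k₁} : Finset n) := by
      intro j _
      simp only [mem_union, mem_filter, mem_univ, true_and, Pi.neg_apply, neg_lt_neg_iff]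
      by_contra! ⟨hj₀, hj₁⟩
      linarith
    have := (card_le_card hcover).trans (card_union_le _ _)
    rw [card_univ] at this
    omega
  exact le_antisymm (not_lt.1 (hnlt j₀ j₁)) (not_lt.1 (hnlt j₁ j₀))

end DecompIdentity

/-- Lemma 5.3: if `(uᵀXu)(u,v) − (u,u)(uᵀXv) = ∑ i (uᵀY_i u)(uᵀB_i v)` with
`X, Y_i` symmetric, `B_i` skew-symmetric, and `d > 2s` where `s` is the number of
non-scalar `Y_i`, then `X` is scalar and both sides vanish identically. -/
theorem scalar_matrix_of_identity (d r : ℕ)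
    (X : Matrix (Fin d) (Fin d) ℝ)
    (Y B : Fin r → Matrix (Fin d) (Fin d) ℝ)
    (hX : Xᵀ = X)
    (hY : ∀ i, (Y i)ᵀ = Y i)
    (hB : ∀ i, (B i)ᵀ = -(B i))
    (hid : ∀ u v : Fin d → ℝ,
      (u ⬝ᵥ X.mulVec u) * (u ⬝ᵥ v) - (u ⬝ᵥ u) * (u ⬝ᵥ X.mulVec v)
        = ∑ i : Fin r, (u ⬝ᵥ (Y i).mulVec u) * (u ⬝ᵥ (B i).mulVec v))
    (hcard : 2 * ({i : Fin r | ¬ ∃ c : ℝ, Y i = c • (1 : Matrix (Fin d) (Fin d) ℝ)}.ncard) < d) :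
    (∃ c : ℝ, X = c • (1 : Matrix (Fin d) (Fin d) ℝ)) ∧
    (∀ u v : Fin d → ℝ,
      (u ⬝ᵥ X.mulVec u) * (u ⬝ᵥ v) - (u ⬝ᵥ u) * (u ⬝ᵥ X.mulVec v) = 0) := by
  have hX' : X.IsHermitian := by rwa [IsHermitian, conjTranspose_eq_transpose_of_trivial]
  have he : ∀ j k, (hX'.eigenvectorBasis j : Fin d → ℝ) ⬝ᵥ hX'.eigenvectorBasis k
      = if j = k then 1 else 0 := fun j k => by
    simpa [EuclideanSpace.inner_eq_star_dotProduct, dotProduct_comm, eq_comm]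
      using orthonormal_iff_ite.1 hX'.eigenvectorBasis.orthonormal j k
  have hconst := DecompIdentity.eigenvalues_eq hid hX hY hB he hX'.mulVec_eigenvectorBasis
    (by rwa [Fintype.card_fin]) ⟨0, by omega⟩
  have hXc := hX'.eq_smul_one_of_eigenvalues_eq fun j => (hconst j).symm
  refine ⟨⟨_, hXc⟩, fun u v => ?_⟩
  rw [hXc]
  simp only [smul_mulVec, one_mulVec, dotProduct_smul, smul_eq_mul]
  ring
end

section
/- Suppose p ≥ 2 and S_1,...,S_{p+q} are real symmetric m×m matrices satisfying the Clifford relations. Then after conjugating all S_i by a common orthogonal matrix, one may assume S_1 = diag(1_d, −1_d) with d = m/2, S_i = [[0, B_i],[B_iᵀ, 0]] for 2 ≤ i ≤ p with B_2 = 1_d and B_i orthogonal and skew-symmetric for 3 ≤ i ≤ p, and S_{p+j} = [[A_j, 0],[0, A_j]] for 1 ≤ j ≤ q, where A_1,...,A_q are symmetric, A_j^2 = 1_d, A_iA_j = −A_jA_i for i ≠ j, B_iB_j = −B_jB_i for 3 ≤ i < j ≤ p, and A_iB_j = B_jA_i. -/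
/-!
`S_1` and `S_2` are anticommuting symmetric involutions, so `S_2` maps the `+1`-eigenspace of
`S_1` isometrically onto its `−1`-eigenspace, and these two eigenspaces are orthogonal and span
`ℝᵐ`. An orthonormal basis `u` of the `+1`-eigenspace together with `S_2 u` is therefore an
orthonormal basis of `ℝᵐ` (so `m = 2d`) in which `S_1` and `S_2` become `diag(1, −1)` and
`[[0, 1], [1, 0]]`. Conjugating the whole family into this basis keeps the Clifford relations.
A symmetric involution anticommuting with `diag(1, −1)` is block off-diagonal, `[[0, B], [Bᵀ, 0]]`;
one commuting with both `diag(1, −1)` and `[[0, 1], [1, 0]]` is `diag(A, A)`; all remaining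
relations are then read off block by block.
-/

open Matrix Module LinearMap Submodule
open scoped InnerProductSpace

section Involution
variable {K V : Type*} [Field K] [NeZero (2 : K)] [AddCommGroup V] [Module K V]

theorem LinearMap.ker_sub_one_sup_ker_add_one_eq_top {T : Module.End K V} (hT : T * T = 1) :
    ker (T - 1) ⊔ ker (T + 1) = ⊤ := by
  refine eq_top_iff.mpr fun x _ => ?_
  have hTT : T (T x) = x := by simpa using LinearMap.congr_fun hT x
  have hx : x = (2 : K)⁻¹ • (x + T x) + (2 : K)⁻¹ • (x - T x) := by
    rw [← smul_add, add_add_sub_cancel, ← two_smul K x, smul_smul, inv_mul_cancel₀ two_ne_zero,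
      one_smul]
  rw [hx]
  refine add_mem_sup ?_ ?_ <;> simp [mem_ker, hTT, smul_sub, smul_add, add_comm]

end Involution

section Anticommute
variable {R V : Type*} [Ring R] [AddCommGroup V] [Module R V] {T A : Module.End R V}

theorem LinearMap.apply_mem_ker_add_one_of_anticommute (hTA : T * A = -(A * T)) {x : V}
    (hx : x ∈ ker (T - 1)) : A x ∈ ker (T + 1) := by
  have hTx : T x = x := by simpa [sub_eq_zero] using hx
  have hTAx : T (A x) = -A (T x) := by simpa using LinearMap.congr_fun hTA x
  simp [hTAx, hTx]

theorem LinearMap.ker_add_one_le_map_ker_sub_one (hA : A * A = 1) (hTA : T * A = -(A * T)) :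
    ker (T + 1) ≤ (ker (T - 1)).map A := by
  intro x hx
  have hTx : T x = -x := by simpa [add_eq_zero_iff_eq_neg] using hx
  have hTAx : T (A x) = -A (T x) := by simpa using LinearMap.congr_fun hTA x
  exact ⟨A x, by simp [hTAx, hTx], by simpa using LinearMap.congr_fun hA x⟩

end Anticommute

section InnerProduct
variable {𝕜 E : Type*} [RCLike 𝕜] [NormedAddCommGroup E] [InnerProductSpace 𝕜 E]
  {T A : E →ₗ[𝕜] E}

theorem LinearMap.IsSymmetric.inner_eq_zero_of_mem_ker_sub_one_of_mem_ker_add_one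
    (hT : T.IsSymmetric) {x y : E} (hx : x ∈ ker (T - 1)) (hy : y ∈ ker (T + 1)) :
    ⟪x, y⟫_𝕜 = 0 := by
  have hTx : T x = x := by simpa [sub_eq_zero] using hx
  have hTy : T y = -y := by simpa [add_eq_zero_iff_eq_neg] using hy
  have h : ⟪x, y⟫_𝕜 = -⟪x, y⟫_𝕜 := by
    rw [← inner_neg_right, ← hTy, ← hT, hTx]
  exact CharZero.eq_neg_self_iff.mp h

theorem LinearMap.IsSymmetric.inner_apply_apply_of_mul_self_eq_one (hA : A.IsSymmetric)
    (hA2 : A * A = 1) (x y : E) : ⟪A x, A y⟫_𝕜 = ⟪x, y⟫_𝕜 := by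
  rw [hA, ← Module.End.mul_apply, hA2, Module.End.one_apply]

variable [FiniteDimensional 𝕜 E]

theorem LinearMap.IsSymmetric.exists_orthonormalBasis_toMatrixOrthonormal_eq_fromBlocks
    (hT : T.IsSymmetric)
    (hA : A.IsSymmetric) (hT2 : T * T = 1) (hA2 : A * A = 1) (hTA : T * A = -(A * T)) :
    ∃ (d : ℕ) (b : OrthonormalBasis (Fin d ⊕ Fin d) 𝕜 E),
      toMatrixOrthonormal b T = fromBlocks 1 0 0 (-1) ∧
      toMatrixOrthonormal b A = fromBlocks 0 1 1 0 := by
  classical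
  set u := stdOrthonormalBasis 𝕜 (ker (T - 1))
  set w : Fin _ ⊕ Fin _ → E := Sum.elim (fun k => (u k : E)) (fun k => A (u k))
  have hAu_mem k : A (u k) ∈ ker (T + 1) := apply_mem_ker_add_one_of_anticommute hTA (u k).2
  have hw : Orthonormal 𝕜 w := by
    rw [orthonormal_iff_ite]
    have hu := orthonormal_iff_ite.mp u.orthonormal
    rintro (k | k) (l | l)
    · simpa [w] using hu k l
    · simpa [w] using
        hT.inner_eq_zero_of_mem_ker_sub_one_of_mem_ker_add_one (u k).2 (hAu_mem l)
    · simpa [w, inner_eq_zero_symm] using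
        hT.inner_eq_zero_of_mem_ker_sub_one_of_mem_ker_add_one (u l).2 (hAu_mem k)
    · simpa [w, hA.inner_apply_apply_of_mul_self_eq_one hA2] using hu k l
  have hspan : ⊤ ≤ span 𝕜 (Set.range w) := by
    have hu_span : span 𝕜 (Set.range fun k => (u k : E)) = ker (T - 1) := by
      have h := congr_arg (map (ker (T - 1)).subtype) u.toBasis.span_eq
      rwa [Submodule.map_span, map_subtype_top, ← Set.range_comp, OrthonormalBasis.coe_toBasis] at h
    rw [← ker_sub_one_sup_ker_add_one_eq_top hT2, Set.Sum.elim_range, span_union, hu_span,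
      Set.range_comp', span_image, hu_span]
    exact sup_le_sup_left (ker_add_one_le_map_ker_sub_one hA2 hTA) _
  have hTw k : T (w (.inl k)) = w (.inl k) := sub_eq_zero.mp (mem_ker.mp (u k).2)
  have hTw' k : T (w (.inr k)) = -w (.inr k) := add_eq_zero_iff_eq_neg.mp (mem_ker.mp (hAu_mem k))
  have hAw k : A (w (.inl k)) = w (.inr k) := rfl
  have hAw' k : A (w (.inr k)) = w (.inl k) := by simpa [w] using LinearMap.congr_fun hA2 (u k)
  have hw_ite := orthonormal_iff_ite.mp hw
  refine ⟨_, .mk hw hspan, ?_, ?_⟩ <;> ext i (k | k) <;>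
    simp only [toMatrixOrthonormal_apply_apply, OrthonormalBasis.coe_mk, hTw, hTw', hAw, hAw',
      inner_neg_right, hw_ite] <;> rcases i with i | i <;> simp [one_apply]

end InnerProduct

theorem LinearMap.toMatrixOrthonormal_toEuclideanLin {𝕜 ι n : Type*} [RCLike 𝕜] [Fintype ι]
    [DecidableEq ι] [Fintype n] [DecidableEq n] (b : OrthonormalBasis ι 𝕜 (EuclideanSpace 𝕜 n))
    (X : Matrix n n 𝕜) :
    toMatrixOrthonormal b (toEuclideanLin X) =
      ((EuclideanSpace.basisFun n 𝕜).toBasis.toMatrix b)ᴴ * X *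
        (EuclideanSpace.basisFun n 𝕜).toBasis.toMatrix b := by
  ext i j
  simp only [toMatrixOrthonormal_apply_apply, PiLp.inner_apply, Matrix.mul_apply,
    Basis.toMatrix_apply, conjTranspose_apply, ofLp_toLpLin, toLin'_apply, mulVec, dotProduct,
    RCLike.inner_apply, Finset.sum_mul, OrthonormalBasis.coe_toBasis_repr_apply,
    EuclideanSpace.basisFun_repr, RCLike.star_def]
  rw [Finset.sum_comm]
  exact Finset.sum_congr rfl fun _ _ => Finset.sum_congr rfl fun _ _ => by ring

theorem Matrix.exists_orthogonal_conj_eq_fromBlocks {n : Type*} [Fintype n] [DecidableEq n]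
    {T A : Matrix n n ℝ} (hT : T.IsSymm) (hA : A.IsSymm) (hT2 : T * T = 1) (hA2 : A * A = 1)
    (hTA : T * A = -(A * T)) :
    ∃ (d : ℕ) (e : n ≃ Fin d ⊕ Fin d) (U : Matrix n n ℝ), Uᵀ * U = 1 ∧
      (U * T * Uᵀ).submatrix e.symm e.symm = fromBlocks 1 0 0 (-1) ∧
      (U * A * Uᵀ).submatrix e.symm e.symm = fromBlocks 0 1 1 0 := by
  let Φ : Matrix n n ℝ ≃ₐ[ℝ] Module.End ℝ (EuclideanSpace ℝ n) := toLpLinAlgEquiv 2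
  have hsymm {X : Matrix n n ℝ} (hX : X.IsSymm) : (Φ X).IsSymmetric :=
    isSymmetric_toEuclideanLin_iff.mpr (by simpa using hX)
  obtain ⟨d, b, hbT, hbA⟩ :=
    (hsymm hT).exists_orthonormalBasis_toMatrixOrthonormal_eq_fromBlocks (hsymm hA)
      (by rw [← map_mul, hT2, map_one]) (by rw [← map_mul, hA2, map_one])
      (by rw [← map_mul, hTA, map_neg, map_mul])
  let std := EuclideanSpace.basisFun n ℝ
  let e : n ≃ Fin d ⊕ Fin d := std.toBasis.indexEquiv b.toBasis
  let P := std.toBasis.toMatrix (b.reindex e.symm)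
  have hconj (X : Matrix n n ℝ) :
      (Pᵀ * X * Pᵀᵀ).submatrix e.symm e.symm = toMatrixOrthonormal b (Φ X) := by
    have h := toMatrixOrthonormal_reindex b e.symm (toEuclideanLin X)
    rw [toMatrixOrthonormal_toEuclideanLin, conjTranspose_eq_transpose_of_trivial] at h
    rw [transpose_transpose, h, reindex_apply, submatrix_submatrix]
    simp only [Equiv.symm_symm, Equiv.self_comp_symm, submatrix_id_id]
    rfl
  refine ⟨d, e, Pᵀ, ?_, by rw [hconj, hbT], by rw [hconj, hbA]⟩
  simpa only [transpose_transpose, conjTranspose_eq_transpose_of_trivial] using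
    std.toMatrix_orthonormalBasis_self_mul_conjTranspose (b.reindex e.symm)

namespace Matrix

theorem eq_zero_of_eq_neg {R m m' : Type*} [AddGroup R] [IsAddTorsionFree R] {X : Matrix m m' R}
    (h : X = -X) : X = 0 := by
  ext i j
  exact self_eq_neg.mp (congr_fun₂ h i j)

variable {R n m : Type*} [CommRing R] [Fintype n] [DecidableEq n] [Fintype m] [DecidableEq m]

section Blocks

variable [IsAddTorsionFree R] {X : Matrix (m ⊕ m) (m ⊕ m) R}

theorem eq_fromBlocks_of_anticomm_fromBlocks_one_neg_one
    (h : X * fromBlocks 1 0 0 (-1) = -(fromBlocks 1 0 0 (-1) * X)) :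
    X = fromBlocks 0 X.toBlocks₁₂ X.toBlocks₂₁ 0 := by
  rw [← fromBlocks_toBlocks X] at h
  have h₁₁ : X.toBlocks₁₁ = 0 := eq_zero_of_eq_neg <| by
    simpa [fromBlocks_multiply, fromBlocks_neg] using congr_arg toBlocks₁₁ h
  have h₂₂ : X.toBlocks₂₂ = 0 := eq_zero_of_eq_neg <| by
    simpa [fromBlocks_multiply, fromBlocks_neg] using (congr_arg toBlocks₂₂ h).symm
  conv_lhs => rw [← fromBlocks_toBlocks X, h₁₁, h₂₂]

theorem eq_fromBlocks_of_comm_fromBlocks_one_neg_one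
    (h : X * fromBlocks 1 0 0 (-1) = fromBlocks 1 0 0 (-1) * X) :
    X = fromBlocks X.toBlocks₁₁ 0 0 X.toBlocks₂₂ := by
  rw [← fromBlocks_toBlocks X] at h
  have h₁₂ : X.toBlocks₁₂ = 0 := eq_zero_of_eq_neg <| by
    simpa [fromBlocks_multiply] using (congr_arg toBlocks₁₂ h).symm
  have h₂₁ : X.toBlocks₂₁ = 0 := eq_zero_of_eq_neg <| by
    simpa [fromBlocks_multiply] using congr_arg toBlocks₂₁ h
  conv_lhs => rw [← fromBlocks_toBlocks X, h₁₂, h₂₁]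

end Blocks

/-- Indices are `0`-based: `S ⟨i, _⟩` is the paper's `S_{i+1}`, so the first group is `i < p`. -/
structure IsCliffordFamily (p : ℕ) {q : ℕ} (S : Fin (p + q) → Matrix n n R) : Prop where
  isSymm : ∀ i, (S i).IsSymm
  mul_self : ∀ i, S i * S i = 1
  mul_comm : ∀ i j : Fin (p + q), ((i : ℕ) < p ∧ p ≤ (j : ℕ)) ∨ (p ≤ (i : ℕ) ∧ (j : ℕ) < p) →
    S i * S j = S j * S i
  mul_anticomm : ∀ i j : Fin (p + q), i ≠ j →
    ((i : ℕ) < p ∧ (j : ℕ) < p) ∨ (p ≤ (i : ℕ) ∧ p ≤ (j : ℕ)) → S i * S j = -(S j * S i)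

namespace IsCliffordFamily

variable {p q : ℕ} {S : Fin (p + q) → Matrix n n R}

theorem conj (hS : IsCliffordFamily p S) {U : Matrix n n R} (hU : Uᵀ * U = 1) :
    IsCliffordFamily p fun i => U * S i * Uᵀ := by
  have hmul X Y : U * X * Uᵀ * (U * Y * Uᵀ) = U * (X * Y) * Uᵀ := by
    simp only [Matrix.mul_assoc, ← Matrix.mul_assoc Uᵀ U, hU, Matrix.one_mul]
  refine ⟨fun i => ?_, fun i => ?_, fun i j h => ?_, fun i j hij h => ?_⟩
  · simp [IsSymm, transpose_mul, (hS.isSymm i).eq, Matrix.mul_assoc]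
  · rw [hmul, hS.mul_self, Matrix.mul_one, mul_eq_one_comm.mp hU]
  · rw [hmul, hmul, hS.mul_comm i j h]
  · rw [hmul, hmul, hS.mul_anticomm i j hij h, Matrix.mul_neg, Matrix.neg_mul]

theorem reindex (hS : IsCliffordFamily p S) (e : n ≃ m) :
    IsCliffordFamily p fun i => Matrix.reindex e e (S i) := by
  have hmul X Y : Matrix.reindex e e X * Matrix.reindex e e Y = Matrix.reindex e e (X * Y) :=
    (map_mul (reindexAlgEquiv R R e) X Y).symm
  refine ⟨fun i => ?_, fun i => ?_, fun i j h => ?_, fun i j hij h => ?_⟩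
  · rw [IsSymm, transpose_reindex, (hS.isSymm i).eq]
  · rw [hmul, hS.mul_self, reindex_apply, submatrix_one_equiv]
  · rw [hmul, hmul, hS.mul_comm i j h]
  · rw [hmul, hmul, hS.mul_anticomm i j hij h]
    exact map_neg (reindexAlgEquiv R R e) _

variable [IsAddTorsionFree R] {F : Fin (p + q) → Matrix (m ⊕ m) (m ⊕ m) R}

theorem eq_fromBlocks_of_lt (hF : IsCliffordFamily p F) {i : Fin (p + q)} (hi : 1 ≤ (i : ℕ))
    (hip : (i : ℕ) < p) (h0 : F ⟨0, by omega⟩ = fromBlocks 1 0 0 (-1)) :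
    F i = fromBlocks 0 (F i).toBlocks₁₂ (F i).toBlocks₁₂ᵀ 0 := by
  have hanti := hF.mul_anticomm i ⟨0, by omega⟩ (Fin.ne_of_val_ne (by dsimp only; omega))
    (.inl ⟨hip, (by omega : 0 < p)⟩)
  rw [h0] at hanti
  have hshape := eq_fromBlocks_of_anticomm_fromBlocks_one_neg_one hanti
  have hsymm := hF.isSymm i
  rw [hshape, isSymm_fromBlocks_iff] at hsymm
  rwa [hsymm.2.1]

theorem eq_fromBlocks_of_le (hF : IsCliffordFamily p F) (hp : 2 ≤ p) {i : Fin (p + q)}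
    (hpi : p ≤ (i : ℕ)) (h0 : F ⟨0, by omega⟩ = fromBlocks 1 0 0 (-1))
    (h1 : F ⟨1, by omega⟩ = fromBlocks 0 1 1 0) :
    F i = fromBlocks (F i).toBlocks₁₁ 0 0 (F i).toBlocks₁₁ := by
  have hcomm₀ := hF.mul_comm i ⟨0, by omega⟩ (.inr ⟨hpi, (by omega : 0 < p)⟩)
  have hcomm₁ := hF.mul_comm i ⟨1, by omega⟩ (.inr ⟨hpi, (by omega : 1 < p)⟩)
  rw [h0] at hcomm₀
  have hshape := eq_fromBlocks_of_comm_fromBlocks_one_neg_one hcomm₀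
  rw [h1, hshape] at hcomm₁
  have h₂₂ : (F i).toBlocks₂₂ = (F i).toBlocks₁₁ := by
    simpa [fromBlocks_multiply] using (congr_arg toBlocks₁₂ hcomm₁).symm
  rwa [h₂₂] at hshape

theorem transpose_toBlocks₁₂_eq_neg (hF : IsCliffordFamily p F) {i : Fin (p + q)}
    (hi : 2 ≤ (i : ℕ)) (hip : (i : ℕ) < p) (h0 : F ⟨0, by omega⟩ = fromBlocks 1 0 0 (-1))
    (h1 : F ⟨1, by omega⟩ = fromBlocks 0 1 1 0) :
    (F i).toBlocks₁₂ᵀ = -(F i).toBlocks₁₂ := by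
  have hanti := hF.mul_anticomm i ⟨1, by omega⟩ (Fin.ne_of_val_ne (by dsimp only; omega))
    (.inl ⟨hip, (by omega : 1 < p)⟩)
  rw [hF.eq_fromBlocks_of_lt (by omega) hip h0, h1] at hanti
  simpa [fromBlocks_multiply, fromBlocks_neg] using congr_arg toBlocks₂₂ hanti

theorem exists_canonical_blocks (hF : IsCliffordFamily p F) (hp : 2 ≤ p)
    (h0 : F ⟨0, by omega⟩ = fromBlocks 1 0 0 (-1)) (h1 : F ⟨1, by omega⟩ = fromBlocks 0 1 1 0) :
    ∃ (A : Fin q → Matrix m m R) (B : Fin p → Matrix m m R),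
      (∀ (i : Fin (p + q)) (h2 : (i : ℕ) < p), 1 ≤ (i : ℕ) →
        F i = fromBlocks 0 (B ⟨(i : ℕ), h2⟩) (B ⟨(i : ℕ), h2⟩)ᵀ 0) ∧
      (∀ (i : Fin (p + q)) (h : p ≤ (i : ℕ)),
        F i = fromBlocks (A ⟨(i : ℕ) - p, by have := i.isLt; omega⟩) 0 0
              (A ⟨(i : ℕ) - p, by have := i.isLt; omega⟩)) ∧
      B ⟨1, by omega⟩ = 1 ∧
      (∀ j : Fin p, 2 ≤ (j : ℕ) → (B j)ᵀ = -(B j) ∧ (B j)ᵀ * B j = 1) ∧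
      (∀ j : Fin q, (A j)ᵀ = A j ∧ A j * A j = 1) ∧
      (∀ j k : Fin q, j ≠ k → A j * A k = -(A k * A j)) ∧
      (∀ j k : Fin p, 2 ≤ (j : ℕ) → 2 ≤ (k : ℕ) → j ≠ k → B j * B k = -(B k * B j)) ∧
      (∀ (j : Fin q) (k : Fin p), 2 ≤ (k : ℕ) → A j * B k = B k * A j) := by
  set A : Fin q → Matrix m m R := fun j => (F (Fin.natAdd p j)).toBlocks₁₁
  set B : Fin p → Matrix m m R := fun j => (F (Fin.castAdd q j)).toBlocks₁₂
  have hA (j : Fin q) : F (Fin.natAdd p j) = fromBlocks (A j) 0 0 (A j) :=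
    hF.eq_fromBlocks_of_le hp (by simp) h0 h1
  have hB (j : Fin p) (hj : 1 ≤ (j : ℕ)) : F (Fin.castAdd q j) = fromBlocks 0 (B j) (B j)ᵀ 0 :=
    hF.eq_fromBlocks_of_lt hj (by simp) h0
  have hBskew (j : Fin p) (hj : 2 ≤ (j : ℕ)) : (B j)ᵀ = -(B j) :=
    hF.transpose_toBlocks₁₂_eq_neg hj (by simp) h0 h1
  refine ⟨A, B, fun i h2 hi => hF.eq_fromBlocks_of_lt hi h2 h0, fun i hi => ?_, by simp [B, h1],
    fun j hj => ⟨hBskew j hj, ?_⟩, fun j => ⟨?_, ?_⟩, fun j k hjk => ?_, fun j k hj hk hjk => ?_,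
    fun j k hk => ?_⟩
  · obtain ⟨j, rfl⟩ : ∃ j : Fin q, i = Fin.natAdd p j :=
      ⟨⟨i - p, by omega⟩, Fin.ext (show (i : ℕ) = p + (i - p) by omega)⟩
    simpa using hA j
  · have h := hF.mul_self (Fin.castAdd q j)
    rw [hB j (by omega), fromBlocks_multiply, ← fromBlocks_one, fromBlocks_inj] at h
    simpa using h.2.2.2
  · have h := hF.isSymm (Fin.natAdd p j)
    rw [hA j, isSymm_fromBlocks_iff] at h
    exact h.1
  · have h := hF.mul_self (Fin.natAdd p j)
    rw [hA j, fromBlocks_multiply, ← fromBlocks_one, fromBlocks_inj] at h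
    simpa using h.1
  · have h := hF.mul_anticomm (Fin.natAdd p j) (Fin.natAdd p k) (by simpa using hjk)
      (.inr ⟨by simp, by simp⟩)
    rw [hA j, hA k] at h
    simpa [fromBlocks_multiply, fromBlocks_neg] using congr_arg toBlocks₁₁ h
  · have h := hF.mul_anticomm (Fin.castAdd q j) (Fin.castAdd q k) (by simpa using hjk)
      (.inl ⟨by simp, by simp⟩)
    rw [hB j (by omega), hB k (by omega), hBskew j hj, hBskew k hk] at h
    rw [← neg_eq_iff_eq_neg]
    simpa [fromBlocks_multiply, fromBlocks_neg] using congr_arg toBlocks₂₂ h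
  · have h := hF.mul_comm (Fin.natAdd p j) (Fin.castAdd q k) (.inr ⟨by simp, by simp⟩)
    rw [hA j, hB k (by omega)] at h
    simpa [fromBlocks_multiply] using congr_arg toBlocks₁₂ h

end IsCliffordFamily

end Matrix

/-- Lemma 2.9, canonical form: for `p ≥ 2`, after an orthogonal change of
basis the basis matrices take the block form `S_1 = diag(1_d, −1_d)`,
`S_i = [[0,B_i],[B_iᵀ,0]]` (`2 ≤ i ≤ p`, `B_2 = 1`, `B_i` orthogonal skew-symmetric for
`i ≥ 3`), `S_{p+j} = diag(A_j, A_j)`, with the stated relations among the `A`'s and `B`'s. -/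
theorem clifford_canonical_form (p q m : ℕ) (hp : 2 ≤ p)
    (S : Fin (p + q) → Matrix (Fin m) (Fin m) ℝ)
    (hsym : ∀ i, (S i)ᵀ = S i)
    (hsq : ∀ i, S i * S i = 1)
    (hcomm : ∀ i j : Fin (p + q),
      (((i : ℕ) < p ∧ p ≤ (j : ℕ)) ∨ (p ≤ (i : ℕ) ∧ (j : ℕ) < p)) →
      S i * S j = S j * S i)
    (hanti : ∀ i j : Fin (p + q), i ≠ j →
      (((i : ℕ) < p ∧ (j : ℕ) < p) ∨ (p ≤ (i : ℕ) ∧ p ≤ (j : ℕ))) →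
      S i * S j = -(S j * S i)) :
    ∃ (d : ℕ) (_ : m = 2 * d) (e : Fin m ≃ (Fin d ⊕ Fin d))
      (U : Matrix (Fin m) (Fin m) ℝ)
      (A : Fin q → Matrix (Fin d) (Fin d) ℝ)
      (B : Fin p → Matrix (Fin d) (Fin d) ℝ),
      Uᵀ * U = 1 ∧
      (∀ i : Fin (p + q), (i : ℕ) = 0 →
        (U * S i * Uᵀ).submatrix e.symm e.symm
          = Matrix.fromBlocks 1 0 0 (-1)) ∧
      (∀ (i : Fin (p + q)) (h2 : (i : ℕ) < p), 1 ≤ (i : ℕ) →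
        (U * S i * Uᵀ).submatrix e.symm e.symm
          = Matrix.fromBlocks 0 (B ⟨(i : ℕ), h2⟩) (B ⟨(i : ℕ), h2⟩)ᵀ 0) ∧
      (∀ (i : Fin (p + q)) (h : p ≤ (i : ℕ)),
        (U * S i * Uᵀ).submatrix e.symm e.symm
          = Matrix.fromBlocks (A ⟨(i : ℕ) - p, by have := i.isLt; omega⟩) 0 0
              (A ⟨(i : ℕ) - p, by have := i.isLt; omega⟩)) ∧
      B ⟨1, by omega⟩ = 1 ∧
      (∀ j : Fin p, 2 ≤ (j : ℕ) → (B j)ᵀ = -(B j) ∧ (B j)ᵀ * B j = 1) ∧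
      (∀ j : Fin q, (A j)ᵀ = A j ∧ A j * A j = 1) ∧
      (∀ j k : Fin q, j ≠ k → A j * A k = -(A k * A j)) ∧
      (∀ j k : Fin p, 2 ≤ (j : ℕ) → 2 ≤ (k : ℕ) → j ≠ k → B j * B k = -(B k * B j)) ∧
      (∀ (j : Fin q) (k : Fin p), 2 ≤ (k : ℕ) → A j * B k = B k * A j) := by
  have hS : IsCliffordFamily p S := ⟨hsym, hsq, hcomm, hanti⟩
  obtain ⟨d, e, U, hU, h0, h1⟩ := exists_orthogonal_conj_eq_fromBlocks (hsym ⟨0, by omega⟩)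
    (hsym ⟨1, by omega⟩) (hsq _) (hsq _)
    (hanti _ _ (by simp) (.inl ⟨(by omega : 0 < p), (by omega : 1 < p)⟩))
  obtain ⟨A, B, hB⟩ := ((hS.conj hU).reindex e).exists_canonical_blocks hp h0 h1
  refine ⟨d, by simpa [two_mul] using Fintype.card_congr e, e, U, A, B, hU, fun i hi => ?_, hB⟩
  rwa [show i = ⟨0, by omega⟩ from Fin.ext hi]
end

section
/- Consider (p,q) = (1,1) with basis matrices S_1 = diag(1_{k_1,k_2}, 1_{k_3,k_4}), S_2 = diag(1_{k_1,k_2}, −1_{k_3,k_4}) where 1_{a,b} = diag(1_a, −1_b). Write w = (u,v). If linear forms f_1(w), f_2(w) satisfy f_1(w)·S_1[w] + f_2(w)·S_2[w] ≡ 0 and are not both zero, then either k_1 + k_2 = 0 or k_3 + k_4 = 0 (equivalently S_1 = ±S_2). -/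
/-!
Suppose both blocks are nonempty, and pick `i` in the first block and `j` in the second, so that
`s₂ i = s₁ i` and `s₂ j = -s₁ j`. On the plane `w = a eᵢ + b eⱼ` the relation becomes a binary cubic
identity in `(a, b)` with coefficients `s₁ᵢ (f₁ ± f₂)(eᵢ)` and `s₁ⱼ (f₁ ± f₂)(eⱼ)`, so all of these
vanish. Hence `f₁` and `f₂` vanish on every basis vector.
-/

theorem binary_cubic_coeffs_eq_zero {c₀ c₁ c₂ c₃ : ℝ}
    (h : ∀ a b : ℝ, c₀ * a ^ 3 + c₁ * a ^ 2 * b + c₂ * a * b ^ 2 + c₃ * b ^ 3 = 0) :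
    c₀ = 0 ∧ c₁ = 0 ∧ c₂ = 0 ∧ c₃ = 0 := by
  have h₁₀ := h 1 0
  have h₀₁ := h 0 1
  have h₁₁ := h 1 1
  have h₁₂ := h 1 (-1)
  refine ⟨?_, ?_, ?_, ?_⟩ <;> linarith

section DiagonalForms

variable {ι : Type*} [Fintype ι] [DecidableEq ι]

theorem sum_mul_sq_smul_single_add_smul_single (s : ι → ℝ) {i j : ι} (hij : i ≠ j) (a b : ℝ) :
    ∑ x, s x * (a • Pi.single i 1 + b • Pi.single j 1 : ι → ℝ) x ^ 2 = s i * a ^ 2 + s j * b ^ 2 := by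
  rw [Finset.sum_eq_add i j hij (fun x _ hx => by simp [hx.1, hx.2]) (by simp) (by simp)]
  simp [hij, hij.symm]

theorem apply_single_eq_zero_at_agreeing_index {s₁ s₂ : ι → ℝ}
    {f₁ f₂ : (ι → ℝ) →ₗ[ℝ] ℝ}
    (hrel : ∀ w : ι → ℝ, f₁ w * (∑ x, s₁ x * w x ^ 2) + f₂ w * (∑ x, s₂ x * w x ^ 2) = 0)
    {i j : ι} (hij : i ≠ j) (hi : s₂ i = s₁ i) (hi₀ : s₁ i ≠ 0)
    (hj : s₂ j = -s₁ j) (hj₀ : s₁ j ≠ 0) :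
    f₁ (Pi.single i 1) = 0 ∧ f₂ (Pi.single i 1) = 0 := by
  set A₁ := f₁ (Pi.single i 1)
  set A₂ := f₂ (Pi.single i 1)
  set B₁ := f₁ (Pi.single j 1)
  set B₂ := f₂ (Pi.single j 1)
  have hcubic : ∀ a b : ℝ, s₁ i * (A₁ + A₂) * a ^ 3 + s₁ i * (B₁ + B₂) * a ^ 2 * b
      + s₁ j * (A₁ - A₂) * a * b ^ 2 + s₁ j * (B₁ - B₂) * b ^ 3 = 0 := by
    intro a b
    have h := hrel (a • Pi.single i 1 + b • Pi.single j 1)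
    simp only [sum_mul_sq_smul_single_add_smul_single _ hij, hi, hj, map_add, map_smul,
      smul_eq_mul] at h
    linear_combination h
  obtain ⟨hplus, -, hminus, -⟩ := binary_cubic_coeffs_eq_zero hcubic
  have hsum : A₁ + A₂ = 0 := (mul_eq_zero.mp hplus).resolve_left hi₀
  have hdiff : A₁ - A₂ = 0 := (mul_eq_zero.mp hminus).resolve_left hj₀
  constructor <;> linarith

/-- Replacing `(s₂, f₂)` by `(-s₂, -f₂)` preserves the relation and exchanges the roles of
`i` and `j`. -/
theorem apply_single_eq_zero_at_opposite_index {s₁ s₂ : ι → ℝ}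
    {f₁ f₂ : (ι → ℝ) →ₗ[ℝ] ℝ}
    (hrel : ∀ w : ι → ℝ, f₁ w * (∑ x, s₁ x * w x ^ 2) + f₂ w * (∑ x, s₂ x * w x ^ 2) = 0)
    {i j : ι} (hij : i ≠ j) (hi : s₂ i = s₁ i) (hi₀ : s₁ i ≠ 0)
    (hj : s₂ j = -s₁ j) (hj₀ : s₁ j ≠ 0) :
    f₁ (Pi.single j 1) = 0 ∧ f₂ (Pi.single j 1) = 0 := by
  have hrel' : ∀ w : ι → ℝ,
      f₁ w * (∑ x, s₁ x * w x ^ 2) + (-f₂) w * (∑ x, (-s₂) x * w x ^ 2) = 0 := by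
    intro w
    simp only [LinearMap.neg_apply, Pi.neg_apply, neg_mul, Finset.sum_neg_distrib]
    linear_combination hrel w
  simpa using apply_single_eq_zero_at_agreeing_index hrel' hij.symm
    (by simp [hj]) hj₀ (by simp [hi]) hi₀

end DiagonalForms

/-- For `(p,q) = (1,1)` with `S_1 = diag(1_{k1,k2}, 1_{k3,k4})` and
`S_2 = diag(1_{k1,k2}, −1_{k3,k4})`: if linear forms `f_1, f_2`, not both zero, satisfy
`f_1(w) S_1[w] + f_2(w) S_2[w] ≡ 0`, then `k1 + k2 = 0` or `k3 + k4 = 0`. -/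
theorem degenerate_one_one (k1 k2 k3 k4 : ℕ)
    (s1 s2 : Fin (k1 + k2 + k3 + k4) → ℝ)
    (hs1 : ∀ i, s1 i = if (i : ℕ) < k1 then 1
      else if (i : ℕ) < k1 + k2 then -1
      else if (i : ℕ) < k1 + k2 + k3 then 1 else -1)
    (hs2 : ∀ i, s2 i = if (i : ℕ) < k1 then 1
      else if (i : ℕ) < k1 + k2 then -1
      else if (i : ℕ) < k1 + k2 + k3 then -1 else 1)
    (f1 f2 : (Fin (k1 + k2 + k3 + k4) → ℝ) →ₗ[ℝ] ℝ)
    (hrel : ∀ w : Fin (k1 + k2 + k3 + k4) → ℝ,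
      f1 w * (∑ i, s1 i * w i ^ 2) + f2 w * (∑ i, s2 i * w i ^ 2) = 0)
    (hne : ¬ (f1 = 0 ∧ f2 = 0)) :
    k1 + k2 = 0 ∨ k3 + k4 = 0 := by
  by_contra! hk
  have hs1_ne : ∀ x, s1 x ≠ 0 := fun x => by rw [hs1]; split_ifs <;> norm_num
  have hs2_first : ∀ x : Fin _, (x : ℕ) < k1 + k2 → s2 x = s1 x := fun x hx => by
    rw [hs1, hs2]; split_ifs <;> first | omega | rfl
  have hs2_second : ∀ x : Fin _, k1 + k2 ≤ (x : ℕ) → s2 x = -s1 x := fun x hx => by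
    rw [hs1, hs2]; split_ifs <;> first | omega | norm_num
  let i₀ : Fin (k1 + k2 + k3 + k4) := ⟨0, by omega⟩
  let j₀ : Fin (k1 + k2 + k3 + k4) := ⟨k1 + k2, by omega⟩
  have hvanish : ∀ x, f1 (Pi.single x 1) = 0 ∧ f2 (Pi.single x 1) = 0 := by
    intro x
    rcases lt_or_ge (x : ℕ) (k1 + k2) with hx | hx
    · exact apply_single_eq_zero_at_agreeing_index hrel
        (Fin.ne_of_val_ne (by dsimp [j₀]; omega)) (hs2_first x hx) (hs1_ne x)
        (hs2_second j₀ le_rfl) (hs1_ne j₀)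
    · exact apply_single_eq_zero_at_opposite_index hrel
        (Fin.ne_of_val_ne (by dsimp [i₀]; omega)) (hs2_first i₀ (by dsimp [i₀]; omega)) (hs1_ne i₀)
        (hs2_second x hx) (hs1_ne x)
  exact hne ⟨(Pi.basisFun ℝ _).ext fun x => by simpa using (hvanish x).1,
    (Pi.basisFun ℝ _).ext fun x => by simpa using (hvanish x).2⟩
end

section
/- Let S_1,...,S_{p+q} be real symmetric m×m matrices satisfying the Clifford relations, and suppose q = 0 and p ≥ 2. Then there is no nontrivial relation Σ_{i=1}^p S_i[w] f_i(w) ≡ 0 with f_i linear forms not all zero. (Equivalently: the p quadratic forms S_1[w],...,S_p[w] admit no nonzero syzygy with linear coefficients.) -/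
open Matrix BigOperators

/-!
Fix `j`. If `S_j v = c v` with `c ≠ 0`, then for `i ≠ j` the matrix `S_i S_j` is skew-symmetric,
so `c · S_i[v] = vᵀ S_i S_j v = 0`; hence the syzygy evaluated at `v` collapses to
`c |v|² f_j(v) = 0`, and `f_j` vanishes on both eigenspaces `S_j v = ± v`. Since `S_j` is an
involution, these eigenspaces span `ℝ^m` (`w = ½(w + S_j w) + ½(w - S_j w)`), so `f_j = 0`.
-/

theorem LinearMap.eq_zero_of_involutive {R M N : Type*} [Ring R] [Invertible (2 : R)]
    [AddCommGroup M] [Module R M] [AddCommGroup N] [Module R N]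
    {T : M →ₗ[R] M} (hT : Function.Involutive T) (g : M →ₗ[R] N)
    (hpos : ∀ v, T v = v → g v = 0) (hneg : ∀ v, T v = -v → g v = 0) : g = 0 := by
  ext w
  have hsum : g (w + T w) + g (w - T w) = (2 : R) • g w := by
    rw [← map_add, add_add_sub_cancel, ← two_smul R w, map_smul]
  rw [hpos _ (by rw [map_add, hT, add_comm]), hneg _ (by rw [map_sub, hT, neg_sub]), zero_add]
    at hsum
  simpa using congrArg (⅟(2 : R) • ·) hsum.symm

namespace Matrix

variable {n R : Type*} [Fintype n]

theorem dotProduct_mulVec_self_eq_zero_of_transpose_eq_neg_s12 [CommRing R] [IsAddTorsionFree R]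
    {A : Matrix n n R} (hA : Aᵀ = -A) (v : n → R) : v ⬝ᵥ A *ᵥ v = 0 := by
  have h : v ⬝ᵥ Aᵀ *ᵥ v = v ⬝ᵥ A *ᵥ v := by
    rw [mulVec_transpose, dotProduct_comm, dotProduct_mulVec]
  rwa [hA, neg_mulVec, dotProduct_neg, neg_eq_self] at h

theorem dotProduct_mulVec_self_eq_zero_of_anticommute [CommRing R] [IsAddTorsionFree R]
    [NoZeroDivisors R] {A B : Matrix n n R} (hA : Aᵀ = A) (hB : Bᵀ = B) (hAB : A * B = -(B * A))
    {c : R} (hc : c ≠ 0) {v : n → R} (hv : B *ᵥ v = c • v) : v ⬝ᵥ A *ᵥ v = 0 := by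
  have hskew : (A * B)ᵀ = -(A * B) := by rw [transpose_mul, hA, hB, hAB, neg_neg]
  have h := dotProduct_mulVec_self_eq_zero_of_transpose_eq_neg_s12 hskew v
  rw [← mulVec_mulVec, hv, mulVec_smul, dotProduct_smul, smul_eq_mul] at h
  exact (mul_eq_zero.mp h).resolve_left hc

theorem apply_eq_zero_of_syzygy_of_mulVec_eq_smul [CommRing R] [LinearOrder R]
    [IsStrictOrderedRing R] {ι : Type*} [Fintype ι] {S : ι → Matrix n n R}
    (hsym : ∀ i, (S i)ᵀ = S i)
    (hanti : ∀ i j, i ≠ j → S i * S j = -(S j * S i)) (f : ι → (n → R) →ₗ[R] R)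
    (hrel : ∀ w, ∑ i, (w ⬝ᵥ S i *ᵥ w) * f i w = 0)
    {j : ι} {c : R} (hc : c ≠ 0) {v : n → R} (hv : S j *ᵥ v = c • v) : f j v = 0 := by
  have hsingle := hrel v
  rw [Finset.sum_eq_single j (fun i _ hij => by
      rw [dotProduct_mulVec_self_eq_zero_of_anticommute (hsym i) (hsym j) (hanti i j hij) hc hv,
        zero_mul])
    (fun h => absurd (Finset.mem_univ j) h),
    hv, dotProduct_smul, smul_eq_mul, mul_assoc] at hsingle
  rcases mul_eq_zero.mp ((mul_eq_zero.mp hsingle).resolve_left hc) with h | h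
  · rw [dotProduct_self_eq_zero.mp h, map_zero]
  · exact h

end Matrix

theorem no_syzygy_definite_case_general (p m : ℕ)
    (S : Fin p → Matrix (Fin m) (Fin m) ℝ)
    (hsym : ∀ i, (S i)ᵀ = S i)
    (hsq : ∀ i, S i * S i = 1)
    (hanti : ∀ i j : Fin p, i ≠ j → S i * S j = -(S j * S i))
    (f : Fin p → ((Fin m → ℝ) →ₗ[ℝ] ℝ))
    (hrel : ∀ w : Fin m → ℝ, ∑ i : Fin p, (w ⬝ᵥ (S i).mulVec w) * f i w = 0) :
    ∀ i, f i = 0 := by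
  intro j
  have hinv : Function.Involutive (S j).mulVecLin := fun v => by
    rw [mulVecLin_apply, mulVecLin_apply, mulVec_mulVec, hsq, one_mulVec]
  refine LinearMap.eq_zero_of_involutive hinv (f j) (fun v hv => ?_) (fun v hv => ?_)
  · exact apply_eq_zero_of_syzygy_of_mulVec_eq_smul hsym hanti f hrel one_ne_zero
      (by simpa using hv)
  · exact apply_eq_zero_of_syzygy_of_mulVec_eq_smul hsym hanti f hrel (neg_ne_zero.mpr one_ne_zero)
      (by simpa using hv)

/-- For `q = 0` and `p ≥ 2`, the quadratic forms `S_i[w]` admit no nonzero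
syzygy with linear coefficients: if `∑ i, S_i[w] f_i(w) ≡ 0` then all `f_i = 0`. -/
theorem no_syzygy_definite_case (p m : ℕ) (hp : 2 ≤ p)
    (S : Fin p → Matrix (Fin m) (Fin m) ℝ)
    (hsym : ∀ i, (S i)ᵀ = S i)
    (hsq : ∀ i, S i * S i = 1)
    (hanti : ∀ i j : Fin p, i ≠ j → S i * S j = -(S j * S i))
    (f : Fin p → ((Fin m → ℝ) →ₗ[ℝ] ℝ))
    (hrel : ∀ w : Fin m → ℝ, ∑ i : Fin p, (w ⬝ᵥ (S i).mulVec w) * f i w = 0) :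
    ∀ i, f i = 0 :=
  no_syzygy_definite_case_general p m S hsym hsq hanti f hrel
end

section
/- Let S_1,...,S_{p+q} satisfy the Clifford relations, let Q(w) = (S_1[w],...,S_{p+q}[w]) : ℝ^m → ℝ^{p+q}, and for i < j let Y = S_iS_j. Then Q is equivariant in the infinitesimal sense: for all w ∈ ℝ^m, d/dt|_{t=0} Q(exp(tY)w) = X_{ij} · Q(w), where X_{ij} = 2E_{ij} − 2ε_iε_jE_{ji} ∈ so(p,q). -/
/-!
The `k`-th component of `Q (exp (t • Y) *ᵥ w)` has derivative `wᵀ (Yᵀ S_k + S_k Y) w` at `t = 0`.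
For `Y = S_i S_j` with symmetric `S`'s, `Yᵀ = S_j S_i`, and the Clifford relations
`S_a S_b = -ε_a ε_b S_b S_a` (`a ≠ b`), `S_a² = 1` reduce `S_j S_i S_k + S_k S_i S_j` to `2 S_j`
if `k = i`, to `-2 ε_i ε_j S_i` if `k = j`, and to `0` otherwise: the `k`-th row of `X_{ij}`
acting on `(S_l)_l`. For `k ∉ {i, j}` the cancellation comes from moving `S_k` past `S_i` and `S_j`
and swapping these two, three sign changes whose product is `-ε_i² ε_j² ε_k² = -1`.
-/

open Matrix

section Derivatives

variable {𝕂 n : Type*} [RCLike 𝕂] [Fintype n] [DecidableEq n]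

section
attribute [local instance] Matrix.linftyOpNormedRing Matrix.linftyOpNormedAlgebra

theorem Matrix.hasDerivAt_exp_smul_mulVec (Y : Matrix n n 𝕂) (w : n → 𝕂) :
    HasDerivAt (fun t : 𝕂 => NormedSpace.exp (t • Y) *ᵥ w) (Y *ᵥ w) 0 := by
  have hexp := hasDerivAt_exp_smul_const (𝕂 := 𝕂) Y 0
  rw [zero_smul, NormedSpace.exp_zero, one_mul] at hexp
  exact ((mulVecBilin 𝕂 𝕂).flip w).toContinuousLinearMap.hasFDerivAt.comp_hasDerivAt 0 hexp

end

theorem HasDerivAt.dotProduct_mulVec {f : 𝕂 → n → 𝕂} {f' : n → 𝕂} {t : 𝕂} (A : Matrix n n 𝕂)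
    (hf : HasDerivAt f f' t) :
    HasDerivAt (fun s => f s ⬝ᵥ A *ᵥ f s) (f t ⬝ᵥ A *ᵥ f' + f' ⬝ᵥ A *ᵥ f t) t := by
  simpa only [LinearMap.toContinuousBilinearMap_apply, toLinearMap₂'_apply'] using
    (toLinearMap₂' 𝕂 A).toContinuousBilinearMap.hasDerivAt_of_bilinear (fun _ => hf) (fun _ => hf)

theorem Matrix.hasDerivAt_dotProduct_mulVec_exp_smul_mulVec (Y A : Matrix n n 𝕂) (w : n → 𝕂) :
    HasDerivAt
      (fun t : 𝕂 => (NormedSpace.exp (t • Y) *ᵥ w) ⬝ᵥ A *ᵥ (NormedSpace.exp (t • Y) *ᵥ w))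
      (w ⬝ᵥ (Yᵀ * A + A * Y) *ᵥ w) 0 := by
  have h := (hasDerivAt_exp_smul_mulVec Y w).dotProduct_mulVec A
  rw [zero_smul, NormedSpace.exp_zero, one_mulVec] at h
  convert h using 1
  rw [add_mulVec, dotProduct_add, ← mulVec_mulVec, ← mulVec_mulVec, dotProduct_mulVec w Yᵀ,
    vecMul_transpose, add_comm]

end Derivatives

theorem Matrix.dotProduct_sum_smul_mulVec {ι n R : Type*} [Fintype ι] [Fintype n] [CommSemiring R]
    (c : ι → R) (S : ι → Matrix n n R) (w : n → R) :
    w ⬝ᵥ (∑ l, c l • S l) *ᵥ w = c ⬝ᵥ fun l => w ⬝ᵥ S l *ᵥ w := by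
  rw [sum_mulVec, dotProduct_sum]
  simp only [smul_mulVec, dotProduct_smul, smul_eq_mul]
  rfl

section Clifford

variable {ι R A : Type*} [CommRing R] [Ring A] [Algebra R A] {s : ι → A} {ε : ι → R}

theorem clifford_mul_mul_self_of_ne (hsq : ∀ i, s i * s i = 1)
    (hswap : ∀ i j, i ≠ j → s i * s j = -(ε i * ε j) • (s j * s i)) {i j : ι} (hij : i ≠ j) :
    s j * s i * s j = -(ε i * ε j) • s i := by
  rw [hswap j i hij.symm, smul_mul_assoc, mul_assoc, hsq, mul_one, mul_comm (ε j)]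

theorem clifford_mul_mul_of_ne (hε : ∀ i, ε i * ε i = 1)
    (hswap : ∀ i j, i ≠ j → s i * s j = -(ε i * ε j) • (s j * s i))
    {i j k : ι} (hij : i ≠ j) (hki : k ≠ i) (hkj : k ≠ j) :
    s j * s i * s k = -(s k * (s i * s j)) := by
  rw [mul_assoc, hswap i k hki.symm, mul_smul_comm, ← mul_assoc, hswap j k hkj.symm,
    smul_mul_assoc, mul_assoc, hswap j i hij.symm, mul_smul_comm, smul_smul, ← mul_assoc,
    smul_smul]
  have hsign : -(ε i * ε k) * -(ε j * ε k) * -(ε j * ε i) = -1 := by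
    linear_combination -((ε i * ε i) * (ε j * ε j) * hε k + (ε i * ε i) * hε j + hε i)
  rw [hsign, neg_one_smul]

theorem clifford_mul_mul_add_mul_mul [Fintype ι] [DecidableEq ι] (hsq : ∀ i, s i * s i = 1)
    (hε : ∀ i, ε i * ε i = 1) (hswap : ∀ i j, i ≠ j → s i * s j = -(ε i * ε j) • (s j * s i))
    {i j : ι} (hij : i ≠ j) (k : ι) :
    s j * s i * s k + s k * (s i * s j)
      = ∑ l, ((2 : R) • single i j (1 : R) - (2 * ε i * ε j) • single j i (1 : R)) k l • s l := by
  simp only [smul_single, smul_eq_mul, mul_one, Matrix.sub_apply, single_apply, ite_and, sub_smul,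
    ite_smul, zero_smul, Finset.sum_sub_distrib, Finset.sum_ite_irrel, Finset.sum_ite_eq,
    Finset.mem_univ, ↓reduceIte, Finset.sum_const_zero]
  rcases eq_or_ne i k with rfl | hik
  · simp [hij.symm, mul_assoc, ← mul_assoc (s i), hsq, two_smul]
  rcases eq_or_ne j k with rfl | hjk
  · simp [hik, ← mul_assoc, clifford_mul_mul_self_of_ne hsq hswap hij]
    module
  · simp [hik, hjk, clifford_mul_mul_of_ne hε hswap hij hik.symm hjk.symm]

end Clifford

/-- Infinitesimal equivariance of the quadratic map `Q`:
`d/dt|₀ Q(exp(t S_iS_j) w) = X_{ij} · Q(w)` with `X_{ij} = 2E_{ij} − 2ε_iε_jE_{ji}`. -/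
theorem quadratic_map_equivariance (p q m : ℕ)
    (S : Fin (p + q) → Matrix (Fin m) (Fin m) ℝ)
    (hsym : ∀ i, (S i)ᵀ = S i)
    (hsq : ∀ i, S i * S i = 1)
    (hcomm : ∀ i j : Fin (p + q),
      (((i : ℕ) < p ∧ p ≤ (j : ℕ)) ∨ (p ≤ (i : ℕ) ∧ (j : ℕ) < p)) →
      S i * S j = S j * S i)
    (hanti : ∀ i j : Fin (p + q), i ≠ j →
      (((i : ℕ) < p ∧ (j : ℕ) < p) ∨ (p ≤ (i : ℕ) ∧ p ≤ (j : ℕ))) →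
      S i * S j = -(S j * S i))
    (ε : Fin (p + q) → ℝ)
    (hε : ∀ i, ε i = if (i : ℕ) < p then 1 else -1)
    (Q : (Fin m → ℝ) → (Fin (p + q) → ℝ))
    (hQ : ∀ (w : Fin m → ℝ) (k : Fin (p + q)), Q w k = w ⬝ᵥ (S k).mulVec w) :
    ∀ i j : Fin (p + q), i < j → ∀ w : Fin m → ℝ,
      deriv (fun t : ℝ => Q ((NormedSpace.exp (t • (S i * S j))).mulVec w)) 0
        = ((2 : ℝ) • Matrix.single i j (1 : ℝ)
            - (2 * ε i * ε j) • Matrix.single j i (1 : ℝ)).mulVec (Q w) := by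
  intro i j hij w
  have hε_sq : ∀ a, ε a * ε a = 1 := fun a => by rw [hε]; split_ifs <;> norm_num
  have hswap : ∀ a b, a ≠ b → S a * S b = -(ε a * ε b) • (S b * S a) := by
    intro a b hab
    rw [hε a, hε b]
    by_cases ha : (a : ℕ) < p <;> by_cases hb : (b : ℕ) < p
    · simpa [ha, hb] using hanti a b hab (.inl ⟨ha, hb⟩)
    · simpa [ha, hb] using hcomm a b (.inl ⟨ha, not_lt.1 hb⟩)
    · simpa [ha, hb] using hcomm a b (.inr ⟨not_lt.1 ha, hb⟩)
    · simpa [ha, hb] using hanti a b hab (.inr ⟨not_lt.1 ha, not_lt.1 hb⟩)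
  have hQ_deriv : HasDerivAt (fun t : ℝ => Q (NormedSpace.exp (t • (S i * S j)) *ᵥ w))
      (fun k => w ⬝ᵥ ((S i * S j)ᵀ * S k + S k * (S i * S j)) *ᵥ w) 0 :=
    hasDerivAt_pi.2 fun k => by
      simpa only [hQ] using hasDerivAt_dotProduct_mulVec_exp_smul_mulVec (S i * S j) (S k) w
  rw [hQ_deriv.deriv]
  ext k
  rw [transpose_mul, hsym, hsym, clifford_mul_mul_add_mul_mul hsq hε_sq hswap hij.ne k,
    dotProduct_sum_smul_mulVec]
  exact congrArg _ (funext fun l => (hQ w l).symm)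
end

section
/- Let A be the commutant {X ∈ M(m,ℝ) : ρ(Y)X = Xρ(Y) for all even Y ∈ R_{p,q}^+}, where ρ is a representation of R_{p,q} = C_p ⊗ C_q by matrices with each S_i = ρ(e_i) symmetric. If r ∈ R_{p,q} is an invertible odd element, then {X ∈ M(m,ℝ) : XᵀS_i + S_iX = 0 for all i} = {X ∈ A : Xᵀρ(r) + ρ(r)X = 0}. -/
open Matrix BigOperators

/-!
Every `S i` is an involution, so `Xᵀ S_i + S_i X = 0` says `Xᵀ = -S_i X S_i`. If this holds for
all `i`, the conjugates `S_j X S_j` all agree, which forces `X` to commute with the even products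
`S_j S_k`; conversely it holds for all `i` as soon as it holds for one `i₀` and `X` commutes
with the `S_{i₀} S_i`. Writing `R = S_{i₀} R'` with `R'` invertible and in the centre of the
commutant, `Xᵀ R + R X = (Xᵀ S_{i₀} + S_{i₀} X) R'`, so for `X` in the commutant the condition
for `R` is equivalent to the condition for `S_{i₀}`.
-/

section InvolutionConjugation

variable {α : Type*} [Ring α] {s u r t x : α}

theorem eq_neg_mul_mul_of_mul_add_mul_eq_zero (hs : s * s = 1) (h : t * s + s * x = 0) :
    t = -(s * x * s) :=
  calc t = t * s * s := by rw [mul_assoc, hs, mul_one]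
    _ = -(s * x) * s := by rw [eq_neg_of_add_eq_zero_left h]
    _ = -(s * x * s) := neg_mul _ _

theorem commute_mul_of_mul_mul_eq (hs : s * s = 1) (hu : u * u = 1)
    (h : s * x * s = u * x * u) : Commute x (s * u) :=
  calc x * (s * u) = (s * s) * x * (s * u) := by rw [hs, one_mul]
    _ = s * (s * x * s) * u := by noncomm_ring
    _ = s * (u * x * u) * u := by rw [h]
    _ = s * u * x * (u * u) := by noncomm_ring
    _ = s * u * x := by rw [hu, mul_one]

theorem mul_add_mul_mul_eq_of_commute (hxr : Commute x r) :
    t * (s * r) + s * r * x = (t * s + s * x) * r := by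
  rw [mul_assoc s r x, ← hxr.eq]
  noncomm_ring

theorem mul_add_mul_eq_zero_of_commute (hs : s * s = 1) (h : t * s + s * x = 0)
    (hxu : Commute x (s * u)) : t * u + u * x = 0 :=
  calc t * u + u * x = -(s * (x * (s * u))) + u * x := by
        rw [eq_neg_mul_mul_of_mul_add_mul_eq_zero hs h]; noncomm_ring
    _ = -((s * s) * (u * x)) + u * x := by rw [hxu.eq]; noncomm_ring
    _ = 0 := by rw [hs, one_mul, neg_add_cancel]

end InvolutionConjugation

theorem h_eq_skew_in_commutant_general (p q m : ℕ)
    (S : Fin (p + q) → Matrix (Fin m) (Fin m) ℝ)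
    (hsq : ∀ i, S i * S i = 1)
    (i₀ : Fin (p + q)) (R R' : Matrix (Fin m) (Fin m) ℝ)
    (hR : R = S i₀ * R')
    (hR' : IsUnit R')
    (hcen : ∀ X : Matrix (Fin m) (Fin m) ℝ,
      (∀ j k : Fin (p + q), X * (S j * S k) = (S j * S k) * X) → X * R' = R' * X) :
    {X : Matrix (Fin m) (Fin m) ℝ | ∀ i, Xᵀ * S i + S i * X = 0}
      = {X : Matrix (Fin m) (Fin m) ℝ |
          (∀ j k : Fin (p + q), X * (S j * S k) = (S j * S k) * X) ∧
          Xᵀ * R + R * X = 0} := by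
  ext X
  constructor
  · intro h
    have hXT i := eq_neg_mul_mul_of_mul_add_mul_eq_zero (hsq i) (h i)
    have hcomm : ∀ j k, Commute X (S j * S k) := fun j k =>
      commute_mul_of_mul_mul_eq (hsq j) (hsq k) (neg_injective ((hXT j).symm.trans (hXT k)))
    refine ⟨hcomm, ?_⟩
    rw [hR, mul_add_mul_mul_eq_of_commute (hcen X hcomm), h i₀, zero_mul]
  · rintro ⟨hcomm, hzero⟩
    have h₀ : Xᵀ * S i₀ + S i₀ * X = 0 := hR'.mul_right_cancel <| by
      rw [← mul_add_mul_mul_eq_of_commute (hcen X hcomm), ← hR, hzero, zero_mul]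
    exact fun i => mul_add_mul_eq_zero_of_commute (hsq i₀) h₀ (hcomm i₀ i)

/-- Lemma 6.1: Let `A` be the commutant of the even products `S_jS_k` and
let `R = ρ(r)` be the image of an invertible odd element, i.e. `R = S_{i₀} R'` with `R'`
invertible and commuting with every member of `A` (as `ρ(e_{i₀} r)` is even). Then
`{X : Xᵀ S_i + S_i X = 0 for all i} = {X ∈ A : Xᵀ R + R X = 0}`. -/
theorem h_eq_skew_in_commutant (p q m : ℕ)
    (S : Fin (p + q) → Matrix (Fin m) (Fin m) ℝ)
    (hsym : ∀ i, (S i)ᵀ = S i)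
    (hsq : ∀ i, S i * S i = 1)
    (hcomm : ∀ i j : Fin (p + q),
      (((i : ℕ) < p ∧ p ≤ (j : ℕ)) ∨ (p ≤ (i : ℕ) ∧ (j : ℕ) < p)) →
      S i * S j = S j * S i)
    (hanti : ∀ i j : Fin (p + q), i ≠ j →
      (((i : ℕ) < p ∧ (j : ℕ) < p) ∨ (p ≤ (i : ℕ) ∧ p ≤ (j : ℕ))) →
      S i * S j = -(S j * S i))
    (i₀ : Fin (p + q)) (R R' : Matrix (Fin m) (Fin m) ℝ)
    (hR : R = S i₀ * R')
    (hR' : IsUnit R')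
    (hcen : ∀ X : Matrix (Fin m) (Fin m) ℝ,
      (∀ j k : Fin (p + q), X * (S j * S k) = (S j * S k) * X) → X * R' = R' * X) :
    {X : Matrix (Fin m) (Fin m) ℝ | ∀ i, Xᵀ * S i + S i * X = 0}
      = {X : Matrix (Fin m) (Fin m) ℝ |
          (∀ j k : Fin (p + q), X * (S j * S k) = (S j * S k) * X) ∧
          Xᵀ * R + R * X = 0} :=
  h_eq_skew_in_commutant_general p q m S hsq i₀ R R' hR hR' hcen
end
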